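/- arXiv:2306.04974 — 2 statements merged into one kernel-verified Lean document; each statement's English description precedes it below -/
import Mathlib

section
/- Let C ≥ 2 be an integer, λ > 0 a real number, and ε a real number with 0 < ε ≤ (1/2) * ((C − 1)/((1 + λ) * C))^2. Let X be a type, A and B subsets of X, y : X → Fin C, and f : X → (Fin C → ℝ) a function such that f x is a positive probability vector on Fin C for every x ∈ A ∪ B. Suppose KL((e_{y x})_λ ‖ f x) < ε for every x ∈ A, and KL(U ‖ f x) < ε for every x ∈ B. Then for every a ∈ A and b ∈ B, MSP(f a) > MSP(f b). -/
/-!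
Both targets `p` (the smoothed one-hot vector on `A`, the uniform vector on `B`) are constant off
one coordinate `j`, so merging the other coordinates (log-sum inequality) and then binary Pinsker
give `2 (p j - q j)² ≤ KL(p ‖ q)`. The smoothed label mass is `1/C + Δ` with
`Δ = (C - 1)/((1 + λ) C)` and the threshold on `ε` is `2 (Δ/2)²`; hence
`f a (y a) > 1/C + Δ/2`, while every coordinate of `f b` is `< 1/C + Δ/2`.
-/

/-- `p` is a positive probability vector on `Fin C`. -/
def IsPosProbVec {C : ℕ} (p : Fin C → ℝ) : Prop :=
  (∀ i, 0 < p i) ∧ ∑ i, p i = 1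

/-- The uniform probability vector on `Fin C`. -/
noncomputable def unif (C : ℕ) : Fin C → ℝ := fun _ => 1 / (C : ℝ)

/-- The smoothed vector `p_λ`, `p_λ i = (p i + λ/C)/(1 + λ)`. -/
noncomputable def smooth {C : ℕ} (lam : ℝ) (p : Fin C → ℝ) : Fin C → ℝ :=
  fun i => (p i + lam / (C : ℝ)) / (1 + lam)

/-- Maximum softmax probability: the maximum of `p` over `Fin C`. -/
noncomputable def MSP {C : ℕ} (p : Fin C → ℝ) : ℝ := ⨆ i, p i

/-- KL divergence `KL(a ‖ b) = ∑ i, a i * log (a i / b i)`; terms with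
`a i = 0` contribute `0` (which holds since `0 * log (0 / b i) = 0`). -/
noncomputable def KLdiv {C : ℕ} (a b : Fin C → ℝ) : ℝ :=
  ∑ i, a i * Real.log (a i / b i)

/-- The one-hot probability vector at `y`. -/
def oneHot {C : ℕ} (y : Fin C) : Fin C → ℝ := fun i => if i = y then 1 else 0

open Finset Real

noncomputable def binaryKL (x t : ℝ) : ℝ :=
  x * log (x / t) + (1 - x) * log ((1 - x) / (1 - t))

lemma binaryKL_one_sub (x t : ℝ) : binaryKL (1 - x) (1 - t) = binaryKL x t := by
  simp only [binaryKL, sub_sub_cancel]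
  ring

@[simp]
lemma binaryKL_self (x : ℝ) : binaryKL x x = 0 := by
  simp [binaryKL]

lemma hasDerivAt_binaryKL_right {x t : ℝ} (hx0 : 0 < x) (hx1 : x < 1) (ht0 : 0 < t)
    (ht1 : t < 1) : HasDerivAt (binaryKL x) ((t - x) / (t * (1 - t))) t := by
  have h1t : (1 : ℝ) - t ≠ 0 := by linarith
  have h1x : (1 : ℝ) - x ≠ 0 := by linarith
  have hlog_t := ((hasDerivAt_const t x).div (hasDerivAt_id t) ht0.ne').log
    (div_ne_zero hx0.ne' ht0.ne')
  have hlog_1t := ((hasDerivAt_const t (1 - x)).div ((hasDerivAt_id t).const_sub 1) h1t).log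
    (div_ne_zero h1x h1t)
  refine ((hlog_t.const_mul x).add (hlog_1t.const_mul (1 - x))).congr_deriv ?_
  simp only [id, Pi.div_apply]
  field_simp
  ring

lemma two_mul_sq_le_binaryKL_of_le {x t : ℝ} (hx1 : x < 1) (ht0 : 0 < t) (htx : t ≤ x) :
    2 * (x - t) ^ 2 ≤ binaryKL x t := by
  set g : ℝ → ℝ := fun s => binaryKL x s - 2 * (x - s) ^ 2
  have hIcc : ∀ s ∈ Set.Icc t x, 0 < s ∧ s < 1 := fun s hs =>
    ⟨ht0.trans_le hs.1, hs.2.trans_lt hx1⟩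
  have hg' : ∀ s ∈ Set.Icc t x,
      HasDerivAt g ((s - x) / (s * (1 - s)) - 2 * (2 * (x - s) * (-1))) s := fun s hs =>
    (hasDerivAt_binaryKL_right (ht0.trans_le htx) hx1 (hIcc s hs).1 (hIcc s hs).2).sub
      (((hasDerivAt_id s).const_sub x).pow 2 |>.const_mul 2 |>.congr_deriv (by simp))
  have hanti : AntitoneOn g (Set.Icc t x) := by
    refine antitoneOn_of_hasDerivWithinAt_nonpos (convex_Icc t x)
      (fun s hs => (hg' s hs).continuousAt.continuousWithinAt)
      (fun s hs => (hg' s (interior_subset hs)).hasDerivWithinAt) fun s hs => ?_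
    obtain ⟨hs0, hs1⟩ := hIcc s (interior_subset hs)
    rw [interior_Icc] at hs
    -- `s (1 - s) ≤ 1/4` is where the constant `2` of Pinsker comes from
    have hs4 : 4 * (s * (1 - s)) ≤ 1 := by nlinarith [sq_nonneg (1 - 2 * s)]
    have : (s - x) / (s * (1 - s)) ≤ 4 * (s - x) := by
      rw [div_le_iff₀ (by nlinarith)]; nlinarith [hs.2]
    linarith
  have := hanti (Set.left_mem_Icc.2 htx) (Set.right_mem_Icc.2 htx) htx
  simp only [g, binaryKL_self, sub_self] at this
  linarith

lemma two_mul_sq_le_binaryKL {x t : ℝ} (hx0 : 0 < x) (hx1 : x < 1) (ht0 : 0 < t) (ht1 : t < 1) :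
    2 * (x - t) ^ 2 ≤ binaryKL x t := by
  rcases le_total t x with htx | hxt
  · exact two_mul_sq_le_binaryKL_of_le hx1 ht0 htx
  · rw [← binaryKL_one_sub]
    convert two_mul_sq_le_binaryKL_of_le (x := 1 - x) (t := 1 - t) (by linarith) (by linarith)
      (by linarith) using 1
    ring

lemma sum_log_le_card_mul_log_average {ι : Type*} (s : Finset ι) {q : ι → ℝ}
    (hq : ∀ i ∈ s, 0 < q i) : ∑ i ∈ s, log (q i) ≤ #s * log ((∑ i ∈ s, q i) / #s) := by
  rcases s.eq_empty_or_nonempty with rfl | hs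
  · simp
  have hn : (0 : ℝ) < #s := by exact_mod_cast hs.card_pos
  have hjensen := strictConcaveOn_log_Ioi.concaveOn.le_map_sum (t := s)
    (w := fun _ => (#s : ℝ)⁻¹) (p := q) (fun _ _ => by positivity) (by simp [hn.ne']) hq
  simp only [smul_eq_mul, ← mul_sum] at hjensen
  rwa [inv_mul_eq_div, inv_mul_eq_div, div_le_iff₀ hn, mul_comm] at hjensen

lemma card_mul_log_div_average_le_sum {ι : Type*} (s : Finset ι) {c : ℝ} (hc : 0 < c)
    {q : ι → ℝ} (hq : ∀ i ∈ s, 0 < q i) :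
    #s * c * log (c / ((∑ i ∈ s, q i) / #s)) ≤ ∑ i ∈ s, c * log (c / q i) := by
  rcases s.eq_empty_or_nonempty with rfl | hs
  · simp
  have hmean : 0 < (∑ i ∈ s, q i) / #s :=
    div_pos (sum_pos hq hs) (by exact_mod_cast hs.card_pos)
  have hlog : ∀ i ∈ s, c * log (c / q i) = c * log c - c * log (q i) := fun i hi => by
    rw [log_div hc.ne' (hq i hi).ne']; ring
  rw [sum_congr rfl hlog, sum_sub_distrib, sum_const, nsmul_eq_mul, ← mul_sum,
    log_div hc.ne' hmean.ne']
  nlinarith [sum_log_le_card_mul_log_average s hq]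

namespace IsPosProbVec

variable {C : ℕ} {q : Fin C → ℝ}

lemma sum_erase (hq : IsPosProbVec q) (j : Fin C) : ∑ i ∈ univ.erase j, q i = 1 - q j := by
  rw [← hq.2, ← add_sum_erase univ q (mem_univ j), add_sub_cancel_left]

lemma lt_one (hq : IsPosProbVec q) (hC : 2 ≤ C) (j : Fin C) : q j < 1 := by
  have : Nontrivial (Fin C) := Fin.nontrivial_iff_two_le.mpr hC
  obtain ⟨i, hij⟩ := exists_ne j
  have := sum_pos (fun k _ => hq.1 k) ⟨i, mem_erase.2 ⟨hij, mem_univ i⟩⟩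
  linarith [hq.sum_erase j]

end IsPosProbVec

lemma card_univ_erase_fin {C : ℕ} (j : Fin C) : (#(univ.erase j) : ℝ) = C - 1 := by
  rw [card_erase_of_mem (mem_univ j), card_univ, Fintype.card_fin, Nat.cast_sub j.pos,
    Nat.cast_one]

lemma binaryKL_le_KLdiv {C : ℕ} (hC : 2 ≤ C) {p q : Fin C → ℝ} (j : Fin C) (hpj : p j < 1)
    (hp : ∀ i ≠ j, p i = (1 - p j) / (C - 1)) (hq : IsPosProbVec q) :
    binaryKL (p j) (q j) ≤ KLdiv p q := by
  have hC1 : (0 : ℝ) < C - 1 := sub_pos.2 (by exact_mod_cast hC)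
  set c := (1 - p j) / (C - 1)
  have hgroup := card_mul_log_div_average_le_sum (univ.erase j) (c := c)
    (div_pos (by linarith) hC1) (fun i _ => hq.1 i)
  have hcard : ((C : ℝ) - 1) * c = 1 - p j := mul_div_cancel₀ _ hC1.ne'
  rw [hq.sum_erase, card_univ_erase_fin, div_div_eq_mul_div, mul_comm c, hcard] at hgroup
  rw [KLdiv, ← add_sum_erase univ _ (mem_univ j), binaryKL,
    sum_congr rfl fun i hi => by rw [hp i (ne_of_mem_erase hi)]]
  linarith

lemma abs_sub_lt_of_KLdiv_lt {C : ℕ} (hC : 2 ≤ C) {p q : Fin C → ℝ} (j : Fin C)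
    (hpj0 : 0 < p j) (hpj1 : p j < 1) (hp : ∀ i ≠ j, p i = (1 - p j) / (C - 1))
    (hq : IsPosProbVec q) {r : ℝ} (hr : 0 ≤ r) (hKL : KLdiv p q < 2 * r ^ 2) :
    |p j - q j| < r := by
  have hpinsker := two_mul_sq_le_binaryKL hpj0 hpj1 (hq.1 j) (hq.lt_one hC j)
  exact abs_lt_of_sq_lt_sq (by linarith [binaryKL_le_KLdiv hC j hpj1 hp hq]) hr

lemma unif_eq_one_sub_div {C : ℕ} (hC : 2 ≤ C) (i j : Fin C) :
    unif C i = (1 - unif C j) / (C - 1) := by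
  have hC1 : (C : ℝ) - 1 ≠ 0 := sub_ne_zero.2 (by exact_mod_cast (by omega : C ≠ 1))
  have hC0 : (C : ℝ) ≠ 0 := by positivity
  simp only [unif]
  field_simp

lemma smooth_oneHot_self {C : ℕ} {lam : ℝ} (hC : C ≠ 0) (hlam : 1 + lam ≠ 0) (y : Fin C) :
    smooth lam (oneHot y) y = 1 / C + (C - 1) / ((1 + lam) * C) := by
  have : (C : ℝ) ≠ 0 := by exact_mod_cast hC
  simp only [smooth, oneHot, ↓reduceIte]
  field_simp
  ring

lemma smooth_oneHot_self_pos {C : ℕ} {lam : ℝ} (hlam : 0 ≤ lam) (y : Fin C) :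
    0 < smooth lam (oneHot y) y := by
  simp only [smooth, oneHot, ↓reduceIte]
  positivity

lemma smooth_oneHot_self_lt_one {C : ℕ} (hC : 2 ≤ C) {lam : ℝ} (hlam : 0 < lam) (y : Fin C) :
    smooth lam (oneHot y) y < 1 := by
  have hCR : (1 : ℝ) < C := by exact_mod_cast hC
  simp only [smooth, oneHot, ↓reduceIte]
  rw [div_lt_one (by positivity), add_lt_add_iff_left, div_lt_iff₀ (by positivity)]
  nlinarith

lemma smooth_oneHot_of_ne {C : ℕ} (hC : 2 ≤ C) {lam : ℝ} (hlam : 1 + lam ≠ 0) {y i : Fin C}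
    (hi : i ≠ y) : smooth lam (oneHot y) i = (1 - smooth lam (oneHot y) y) / (C - 1) := by
  have hC1 : (C : ℝ) - 1 ≠ 0 := sub_ne_zero.2 (by exact_mod_cast (by omega : C ≠ 1))
  have hC0 : (C : ℝ) ≠ 0 := by positivity
  simp only [smooth, oneHot, ↓reduceIte, if_neg hi]
  field_simp
  ring

lemma le_MSP {C : ℕ} (p : Fin C → ℝ) (i : Fin C) : p i ≤ MSP p :=
  le_ciSup (Finite.bddAbove_range p) i

lemma MSP_lt {C : ℕ} [NeZero C] {p : Fin C → ℝ} {r : ℝ} (h : ∀ i, p i < r) :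
    MSP p < r := by
  obtain ⟨i, hi⟩ := Finite.exists_max p
  exact (ciSup_le hi).trans_lt (h i)

theorem MSP_separation_of_small_KL_general
    (C : ℕ) (hC : 2 ≤ C) (lam : ℝ) (hlam : 0 < lam) (ε : ℝ)
    (hε' : ε ≤ (1 / 2) * (((C : ℝ) - 1) / ((1 + lam) * (C : ℝ))) ^ 2)
    {X : Type*} (A B : Set X) (y : X → Fin C) (f : X → (Fin C → ℝ))
    (hf : ∀ x ∈ A ∪ B, IsPosProbVec (f x))
    (hA : ∀ x ∈ A, KLdiv (smooth lam (oneHot (y x))) (f x) < ε)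
    (hB : ∀ x ∈ B, KLdiv (unif C) (f x) < ε) :
    ∀ a ∈ A, ∀ b ∈ B, MSP (f a) > MSP (f b) := by
  intro a ha b hb
  have : NeZero C := ⟨by omega⟩
  have hCR : (2 : ℝ) ≤ C := by exact_mod_cast hC
  set Δ := ((C : ℝ) - 1) / ((1 + lam) * C)
  have hΔ : 0 < Δ := div_pos (by linarith) (by positivity)
  have hεΔ : ε ≤ 2 * (Δ / 2) ^ 2 := hε'.trans_eq (by ring)
  have hAa := abs_sub_lt_of_KLdiv_lt hC (y a) (smooth_oneHot_self_pos hlam.le (y a))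
    (smooth_oneHot_self_lt_one hC hlam (y a))
    (fun i hi => smooth_oneHot_of_ne hC (by positivity) hi) (hf a (Or.inl ha)) (by positivity)
    ((hA a ha).trans_le hεΔ)
  have hBb : ∀ i, |unif C i - f b i| < Δ / 2 := fun i =>
    abs_sub_lt_of_KLdiv_lt hC i (by simp only [unif]; positivity)
      (by simp only [unif]; rw [div_lt_one (by positivity)]; linarith)
      (fun k _ => unif_eq_one_sub_div hC k i) (hf b (Or.inr hb)) (by positivity)
      ((hB b hb).trans_le hεΔ)
  rw [smooth_oneHot_self (by omega) (by positivity)] at hAa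
  calc MSP (f b) < 1 / C + Δ / 2 := MSP_lt fun i => by
        linarith [(abs_lt.1 (hBb i)).1, show unif C i = 1 / C from rfl]
    _ < f a (y a) := by linarith [(abs_lt.1 hAa).2]
    _ ≤ MSP (f a) := le_MSP _ _

/-- If on `A` the predictions are KL-close to smoothed one-hot targets and on
`B` they are KL-close to uniform, with `ε` below the critical threshold, then
every point of `A` receives strictly larger maximum softmax probability than
every point of `B`. -/
theorem MSP_separation_of_small_KL
    (C : ℕ) (hC : 2 ≤ C) (lam : ℝ) (hlam : 0 < lam) (ε : ℝ)
    (hε : 0 < ε) (hε' : ε ≤ (1 / 2) * (((C : ℝ) - 1) / ((1 + lam) * (C : ℝ))) ^ 2)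
    {X : Type*} (A B : Set X) (y : X → Fin C) (f : X → (Fin C → ℝ))
    (hf : ∀ x ∈ A ∪ B, IsPosProbVec (f x))
    (hA : ∀ x ∈ A, KLdiv (smooth lam (oneHot (y x))) (f x) < ε)
    (hB : ∀ x ∈ B, KLdiv (unif C) (f x) < ε) :
    ∀ a ∈ A, ∀ b ∈ B, MSP (f a) > MSP (f b) :=
  MSP_separation_of_small_KL_general C hC lam hlam ε hε' A B y f hf hA hB
end

section
/- Let C ≥ 1 be an integer, λ > 0 a real number, X a type, A and B finite subsets of X with A ∩ B = ∅, and y : X → Fin C. Then for every function f : X → (Fin C → ℝ) whose value f x is a positive probability vector on Fin C for every x ∈ A ∪ B: L(f) − L_0 = (1 + λ) * ∑ over x ∈ A of KL((e_{y x})_λ ‖ f x) + λ * ∑ over x ∈ B of KL(U ‖ f x). In particular L(f) ≥ L_0, with equality if and only if f x = (e_{y x})_λ for all x ∈ A and f x = U for all x ∈ B. -/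
/-- Cross-entropy `H(a, b) = −∑ i, a i * log (b i)`. -/
noncomputable def crossEnt {C : ℕ} (a b : Fin C → ℝ) : ℝ :=
  -∑ i, a i * Real.log (b i)

/-- The DCM loss `L(f)`. -/
noncomputable def dcmLoss {C : ℕ} {X : Type*} (A B : Finset X) (y : X → Fin C)
    (lam : ℝ) (f : X → (Fin C → ℝ)) : ℝ :=
  (∑ x ∈ A, (crossEnt (oneHot (y x)) (f x) + lam * crossEnt (unif C) (f x))) +
    lam * ∑ x ∈ B, crossEnt (unif C) (f x)

/-- The optimal DCM loss `L_0`. -/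
noncomputable def dcmOptLoss {C : ℕ} {X : Type*} (A B : Finset X) (y : X → Fin C)
    (lam : ℝ) : ℝ :=
  (∑ x ∈ A, (crossEnt (oneHot (y x)) (smooth lam (oneHot (y x))) +
      lam * crossEnt (unif C) (smooth lam (oneHot (y x))))) +
    lam * (B.card : ℝ) * Real.log (C : ℝ)

lemma sum_oneHot {C : ℕ} (y : Fin C) : ∑ i, oneHot y i = 1 := by
  simp [oneHot]

lemma unif_isPos {C : ℕ} (hC : 1 ≤ C) : IsPosProbVec (unif C) := by
  have hC0 : (0:ℝ) < C := by exact_mod_cast hC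
  refine ⟨fun i => by simp only [unif]; positivity, ?_⟩
  simp [unif, Finset.card_univ]
  field_simp

lemma smooth_isPos {C : ℕ} (hC : 1 ≤ C) {lam : ℝ} (hlam : 0 < lam) (y : Fin C) :
    IsPosProbVec (smooth lam (oneHot y)) := by
  have hC0 : (0:ℝ) < C := by exact_mod_cast hC
  have h1 : (0:ℝ) < 1 + lam := by linarith
  constructor
  · intro i
    have h2 : 0 ≤ oneHot y i := by unfold oneHot; split <;> norm_num
    have h3 : 0 < lam / C := div_pos hlam hC0
    exact div_pos (by linarith) h1
  · unfold smooth
    rw [← Finset.sum_div]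
    rw [Finset.sum_add_distrib, sum_oneHot]
    simp [Finset.card_univ]
    field_simp

lemma crossEnt_sub {C : ℕ} {a b : Fin C → ℝ} (ha : ∀ i, 0 < a i) (hb : ∀ i, 0 < b i) :
    crossEnt a b - crossEnt a a = KLdiv a b := by
  have h : ∀ i, a i * Real.log (a i / b i)
      = a i * Real.log (a i) - a i * Real.log (b i) := fun i => by
    rw [Real.log_div (ha i).ne' (hb i).ne']; ring
  unfold crossEnt KLdiv
  simp_rw [h]
  rw [Finset.sum_sub_distrib]
  ring

lemma crossEnt_unif_unif {C : ℕ} (hC : 1 ≤ C) :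
    crossEnt (unif C) (unif C) = Real.log C := by
  have hC0 : (0:ℝ) < C := by exact_mod_cast hC
  unfold crossEnt unif
  rw [Finset.sum_const, Finset.card_univ, Fintype.card_fin, nsmul_eq_mul]
  rw [one_div, Real.log_inv]
  field_simp

lemma combine_crossEnt {C : ℕ} (hC : 1 ≤ C) {lam : ℝ} (hlam : 0 < lam)
    (y : Fin C) (b : Fin C → ℝ) :
    crossEnt (oneHot y) b + lam * crossEnt (unif C) b
      = (1 + lam) * crossEnt (smooth lam (oneHot y)) b := by
  have hC0 : (0:ℝ) < C := by exact_mod_cast hC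
  have h1 : (1:ℝ) + lam ≠ 0 := by positivity
  have key : ∀ i, oneHot y i * Real.log (b i) + lam * (unif C i * Real.log (b i))
      = (1 + lam) * (smooth lam (oneHot y) i * Real.log (b i)) := fun i => by
    unfold unif smooth
    field_simp
  have hsum : ∑ i, (oneHot y i * Real.log (b i) + lam * (unif C i * Real.log (b i)))
      = ∑ i, (1 + lam) * (smooth lam (oneHot y) i * Real.log (b i)) :=
    Finset.sum_congr rfl fun i _ => key i
  rw [Finset.sum_add_distrib, ← Finset.mul_sum, ← Finset.mul_sum] at hsum
  unfold crossEnt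
  linarith

lemma KL_key {C : ℕ} {a b : Fin C → ℝ} (ha : IsPosProbVec a) (hb : IsPosProbVec b) :
    0 ≤ KLdiv a b ∧ (KLdiv a b = 0 ↔ b = a) := by
  obtain ⟨hap, has⟩ := ha
  obtain ⟨hbp, hbs⟩ := hb
  have term_ge : ∀ i, a i - b i ≤ a i * Real.log (a i / b i) := by
    intro i
    have h1 : Real.log (b i / a i) ≤ b i / a i - 1 :=
      Real.log_le_sub_one_of_pos (div_pos (hbp i) (hap i))
    have h2 : Real.log (a i / b i) = -Real.log (b i / a i) := by
      rw [Real.log_div (hap i).ne' (hbp i).ne', Real.log_div (hbp i).ne' (hap i).ne']; ring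
    have h3 : a i * (b i / a i - 1) = b i - a i := by
      have := (hap i).ne'
      field_simp
    rw [h2, mul_neg]
    nlinarith [mul_le_mul_of_nonneg_left h1 (hap i).le]
  have hnn : 0 ≤ KLdiv a b := by
    have : ∑ i, (a i - b i) ≤ KLdiv a b := Finset.sum_le_sum (fun i _ => term_ge i)
    rw [Finset.sum_sub_distrib, has, hbs] at this
    linarith
  refine ⟨hnn, ?_, ?_⟩
  · intro h0
    have hz : ∑ i, (a i * Real.log (a i / b i) - (a i - b i)) = 0 := by
      rw [Finset.sum_sub_distrib, Finset.sum_sub_distrib, has, hbs]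
      unfold KLdiv at h0
      linarith
    have heach := (Finset.sum_eq_zero_iff_of_nonneg
      (fun i _ => by linarith [term_ge i])).mp hz
    funext i
    have hi := heach i (Finset.mem_univ i)
    by_contra hne
    have hne' : b i / a i ≠ 1 := fun h =>
      hne ((div_eq_one_iff_eq (hap i).ne').mp h)
    have h1 : Real.log (b i / a i) < b i / a i - 1 :=
      Real.log_lt_sub_one_of_pos (div_pos (hbp i) (hap i)) hne'
    have h2 : Real.log (a i / b i) = -Real.log (b i / a i) := by
      rw [Real.log_div (hap i).ne' (hbp i).ne', Real.log_div (hbp i).ne' (hap i).ne']; ring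
    have h3 : a i * (b i / a i - 1) = b i - a i := by
      have := (hap i).ne'
      field_simp
    have hi' : a i * Real.log (a i / b i) = a i - b i := by linarith
    rw [h2, mul_neg] at hi'
    nlinarith [mul_lt_mul_of_pos_left h1 (hap i)]
  · intro h
    subst h
    unfold KLdiv
    apply Finset.sum_eq_zero
    intro i _
    rw [div_self (hap i).ne', Real.log_one, mul_zero]


/-- The excess DCM loss decomposes as a weighted sum of KL divergences; in
particular `L(f) ≥ L_0` with equality iff `f` equals the smoothed one-hot
targets on `A` and the uniform vector on `B`. -/
theorem dcmLoss_sub_optLoss_eq_KL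
    (C : ℕ) (hC : 1 ≤ C) (lam : ℝ) (hlam : 0 < lam)
    {X : Type*} [DecidableEq X] (A B : Finset X) (hAB : Disjoint A B)
    (y : X → Fin C) (f : X → (Fin C → ℝ))
    (hf : ∀ x ∈ A ∪ B, IsPosProbVec (f x)) :
    dcmLoss A B y lam f - dcmOptLoss A B y lam =
        (1 + lam) * ∑ x ∈ A, KLdiv (smooth lam (oneHot (y x))) (f x) +
          lam * ∑ x ∈ B, KLdiv (unif C) (f x) ∧
      dcmLoss A B y lam f ≥ dcmOptLoss A B y lam ∧
      (dcmLoss A B y lam f = dcmOptLoss A B y lam ↔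
        (∀ x ∈ A, f x = smooth lam (oneHot (y x))) ∧ (∀ x ∈ B, f x = unif C)) := by
  have h1lam : (0:ℝ) < 1 + lam := by linarith
  have hfA : ∀ x ∈ A, IsPosProbVec (f x) :=
    fun x hx => hf x (Finset.mem_union_left _ hx)
  have hfB : ∀ x ∈ B, IsPosProbVec (f x) :=
    fun x hx => hf x (Finset.mem_union_right _ hx)
  -- per-point facts on A
  have hA' : ∀ x ∈ A,
      (crossEnt (oneHot (y x)) (f x) + lam * crossEnt (unif C) (f x)) -
        (crossEnt (oneHot (y x)) (smooth lam (oneHot (y x))) +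
          lam * crossEnt (unif C) (smooth lam (oneHot (y x))))
      = (1 + lam) * KLdiv (smooth lam (oneHot (y x))) (f x) := by
    intro x hx
    have h1 := combine_crossEnt hC hlam (y x) (f x)
    have h2 := combine_crossEnt hC hlam (y x) (smooth lam (oneHot (y x)))
    have h3 := crossEnt_sub (smooth_isPos hC hlam (y x)).1 (hfA x hx).1
    rw [h1, h2, ← mul_sub, h3]
  have hB' : ∀ x ∈ B,
      crossEnt (unif C) (f x) - Real.log C = KLdiv (unif C) (f x) := by
    intro x hx
    rw [← crossEnt_unif_unif hC]
    exact crossEnt_sub (unif_isPos hC).1 (hfB x hx).1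
  -- the main identity
  have hmain : dcmLoss A B y lam f - dcmOptLoss A B y lam =
      (1 + lam) * ∑ x ∈ A, KLdiv (smooth lam (oneHot (y x))) (f x) +
        lam * ∑ x ∈ B, KLdiv (unif C) (f x) := by
    have e1 : (∑ x ∈ A, (crossEnt (oneHot (y x)) (f x) + lam * crossEnt (unif C) (f x)))
        - (∑ x ∈ A, (crossEnt (oneHot (y x)) (smooth lam (oneHot (y x))) +
            lam * crossEnt (unif C) (smooth lam (oneHot (y x)))))
        = (1 + lam) * ∑ x ∈ A, KLdiv (smooth lam (oneHot (y x))) (f x) := by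
      rw [Finset.mul_sum, ← Finset.sum_sub_distrib]
      exact Finset.sum_congr rfl hA'
    have e2 : (∑ x ∈ B, crossEnt (unif C) (f x)) - (B.card : ℝ) * Real.log C
        = ∑ x ∈ B, KLdiv (unif C) (f x) := by
      have : (B.card : ℝ) * Real.log C = ∑ _x ∈ B, Real.log C := by
        rw [Finset.sum_const, nsmul_eq_mul]
      rw [this, ← Finset.sum_sub_distrib]
      exact Finset.sum_congr rfl hB'
    unfold dcmLoss dcmOptLoss
    have := mul_comm lam ((B.card : ℝ) * Real.log C)
    nlinarith [e1, e2]
  refine ⟨hmain, ?_, ?_⟩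
  -- nonnegativity pieces
  all_goals {
    have hKA : ∀ x ∈ A, 0 ≤ KLdiv (smooth lam (oneHot (y x))) (f x) :=
      fun x hx => (KL_key (smooth_isPos hC hlam (y x)) (hfA x hx)).1
    have hKB : ∀ x ∈ B, 0 ≤ KLdiv (unif C) (f x) :=
      fun x hx => (KL_key (unif_isPos hC) (hfB x hx)).1
    have hSA : 0 ≤ ∑ x ∈ A, KLdiv (smooth lam (oneHot (y x))) (f x) :=
      Finset.sum_nonneg hKA
    have hSB : 0 ≤ ∑ x ∈ B, KLdiv (unif C) (f x) := Finset.sum_nonneg hKB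
    first
    | nlinarith [mul_nonneg h1lam.le hSA, mul_nonneg hlam.le hSB]
    | {
      constructor
      · intro heq
        have hz : (1 + lam) * ∑ x ∈ A, KLdiv (smooth lam (oneHot (y x))) (f x) +
            lam * ∑ x ∈ B, KLdiv (unif C) (f x) = 0 := by linarith [hmain]
        have hSA0 : ∑ x ∈ A, KLdiv (smooth lam (oneHot (y x))) (f x) = 0 := by
          nlinarith [mul_nonneg h1lam.le hSA, mul_nonneg hlam.le hSB]
        have hSB0 : ∑ x ∈ B, KLdiv (unif C) (f x) = 0 := by
          nlinarith [mul_nonneg h1lam.le hSA, mul_nonneg hlam.le hSB]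
        constructor
        · intro x hx
          have := (Finset.sum_eq_zero_iff_of_nonneg hKA).mp hSA0 x hx
          exact (KL_key (smooth_isPos hC hlam (y x)) (hfA x hx)).2.mp this
        · intro x hx
          have := (Finset.sum_eq_zero_iff_of_nonneg hKB).mp hSB0 x hx
          exact (KL_key (unif_isPos hC) (hfB x hx)).2.mp this
      · rintro ⟨h1, h2⟩
        have hSA0 : ∑ x ∈ A, KLdiv (smooth lam (oneHot (y x))) (f x) = 0 :=
          Finset.sum_eq_zero fun x hx =>
            (KL_key (smooth_isPos hC hlam (y x)) (hfA x hx)).2.mpr (h1 x hx)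
        have hSB0 : ∑ x ∈ B, KLdiv (unif C) (f x) = 0 :=
          Finset.sum_eq_zero fun x hx =>
            (KL_key (unif_isPos hC) (hfB x hx)).2.mpr (h2 x hx)
        rw [hSA0, hSB0] at hmain
        linarith [hmain]
    }
  }
end
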